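/- Let u(n) denote the number of words of length n over alphabet \mathbb{Z}_q that start with a letter from J, end with a letter from J, and contain no k consecutive letters all from I (where I, J bipartition \mathbb{Z}_q), with u(n) = 0 for n \le 0. Then u(1) = |J|, u(2) = |J|^2, and for all n \ge 3, u(n) = q \cdot u(n-1) - |I|^k |J| \cdot u(n-k-1). -/

import Mathlib

/-!
Write `J = Iᶜ`. For `n ≥ 2` a word of length `n` with first and last letter in `J` and no `k`
consecutive letters from `I` splits uniquely as `v ++ r ++ [b]`: `b ∈ J` is its last letter, `r`
the maximal run of `I`-letters before it (so `|r| < k`), and `v` is again such a word. Hence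
`u (m + 2) = ∑_{j<k} |I|^j |J| u (m + 1 - j)`, and subtracting `|I|` times the same identity one
step earlier telescopes the sum to `u (m + 2) = (|I| + |J|) u (m + 1) - |I|^k |J| u (m + 1 - k)`.
-/

namespace RunAvoidingWords

open Finset

section Lists

variable {α : Type*}

theorem rtakeWhile_append_of_forall {p : α → Bool} {v r : List α}
    (hv : ∀ a ∈ v.getLast?, ¬p a) (hr : ∀ a ∈ r, p a) : (v ++ r).rtakeWhile p = r := by
  induction r using List.reverseRecOn with
  | nil =>
    rw [List.append_nil, List.rtakeWhile_eq_nil_iff]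
    exact fun hl => hv _ (List.getLast?_eq_some_getLast hl)
  | append_singleton r x ih =>
    rw [← List.append_assoc, List.rtakeWhile_concat_pos _ _ _ (hr x (by simp)),
      ih fun a ha => hr a (by simp [ha])]

theorem rdropWhile_append_of_forall {p : α → Bool} {v r : List α}
    (hv : ∀ a ∈ v.getLast?, ¬p a) (hr : ∀ a ∈ r, p a) : (v ++ r).rdropWhile p = v := by
  induction r using List.reverseRecOn with
  | nil =>
    rw [List.append_nil, List.rdropWhile_eq_self_iff]
    exact fun hl => hv _ (List.getLast?_eq_some_getLast hl)
  | append_singleton r x ih =>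
    rw [← List.append_assoc, List.rdropWhile_concat_pos _ _ _ (hr x (by simp)),
      ih fun a ha => hr a (by simp [ha])]

theorem append_inj_of_getLast?_of_forall {p : α → Bool} {v₁ v₂ r₁ r₂ : List α}
    (h : v₁ ++ r₁ = v₂ ++ r₂) (hv₁ : ∀ a ∈ v₁.getLast?, ¬p a) (hv₂ : ∀ a ∈ v₂.getLast?, ¬p a)
    (hr₁ : ∀ a ∈ r₁, p a) (hr₂ : ∀ a ∈ r₂, p a) : v₁ = v₂ ∧ r₁ = r₂ :=
  ⟨by rw [← rdropWhile_append_of_forall hv₁ hr₁, h, rdropWhile_append_of_forall hv₂ hr₂],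
    by rw [← rtakeWhile_append_of_forall hv₁ hr₁, h, rtakeWhile_append_of_forall hv₂ hr₂]⟩

theorem head?_eq_some_of_prefix {l₁ l₂ : List α} {a : α} (h : l₁ <+: l₂)
    (ha : l₁.head? = some a) : l₂.head? = some a := by
  rw [← List.singleton_prefix_iff_head?_eq_some] at ha ⊢
  exact ha.trans h

theorem infix_of_infix_append_singleton {s l : List α} {b : α} (hs : s <:+: l ++ [b])
    (hb : b ∉ s) : s <:+: l := by
  rcases List.infix_concat_iff.mp hs with h | h
  · rcases List.suffix_concat_iff.mp h with rfl | ⟨t, rfl, -⟩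
    · exact List.nil_infix
    · simp at hb
  · exact h

theorem infix_or_infix_of_infix_append {p : α → Prop} {s xs ys : List α} (hs : s <:+: xs ++ ys)
    (hsp : ∀ a ∈ s, p a) (hxs : ∀ a ∈ xs.getLast?, ¬p a) : s <:+: xs ∨ s <:+: ys := by
  rcases List.infix_append_iff_ne_nil.mp hs with h | h | ⟨l₁, l₂, hl₁, -, rfl, hsuf, -⟩
  · exact .inl h
  · exact .inr h
  · refine absurd (hsp _ (List.mem_append_left l₂ (List.getLast_mem hl₁))) (hxs _ ?_)
    rw [hsuf.getLast hl₁]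
    exact List.getLast?_eq_some_getLast _

instance finite_subtype_length_eq [Finite α] (n : ℕ) (P : List α → Prop) :
    Finite {w : List α // w.length = n ∧ P w} :=
  Set.Finite.to_subtype (s := {w : List α | w.length = n ∧ P w})
    ((List.finite_length_eq α n).subset fun _ => And.left)

end Lists

section Words

variable {α : Type*} (I : Finset α) (k : ℕ)

def ContainsRun (w : List α) : Prop :=
  ∃ s : List α, s.length = k ∧ (∀ a ∈ s, a ∈ I) ∧ s <:+: w

def Admissible (w : List α) : Prop :=
  w ≠ [] ∧ (∀ a ∈ w.head?, a ∉ I) ∧ (∀ a ∈ w.getLast?, a ∉ I) ∧ ¬ContainsRun I k w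

abbrev AdmissibleWord (n : ℕ) : Type _ := {w : List α // w.length = n ∧ Admissible I k w}

variable {I k} {v r w : List α}

theorem card_admissibleWord_zero : Nat.card (AdmissibleWord I k 0) = 0 :=
  Nat.card_eq_zero.mpr (.inl ⟨fun w => w.2.2.1 (List.length_eq_zero_iff.mp w.2.1)⟩)

theorem ContainsRun.mono (h : ContainsRun I k v) (hvw : v <:+: w) : ContainsRun I k w :=
  let ⟨s, hsk, hsI, hsv⟩ := h
  ⟨s, hsk, hsI, hsv.trans hvw⟩

theorem length_lt_of_not_containsRun (hw : ¬ContainsRun I k w) (hr : ∀ a ∈ r, a ∈ I)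
    (hrw : r <:+: w) : r.length < k := by
  by_contra! hkr
  refine hw ⟨r.drop (r.length - k), by simp; omega, fun a ha => hr a (List.mem_of_mem_drop ha),
    (List.drop_suffix _ _).isInfix.trans hrw⟩

theorem admissible_singleton (hk : 1 ≤ k) {b : α} : Admissible I k [b] ↔ b ∉ I := by
  refine ⟨fun h => h.2.1 b rfl, fun hb => ⟨List.cons_ne_nil _ _, by simpa, by simpa, ?_⟩⟩
  rintro ⟨s, hsk, hsI, hs⟩
  obtain ⟨a, ha⟩ := List.exists_mem_of_length_pos (by omega : 0 < s.length)
  obtain rfl : a = b := by simpa using hs.subset ha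
  exact hb (hsI a ha)

theorem admissible_iff_getD (hw : w ≠ []) (z : α) :
    Admissible I k w ↔ w.getD 0 z ∉ I ∧ w.getD (w.length - 1) z ∉ I ∧ ¬ContainsRun I k w := by
  have hpos : 0 < w.length := List.length_pos_iff.mpr hw
  simp [Admissible, hw, List.head?_eq_some_head hw, List.getLast?_eq_some_getLast hw,
    List.getD_eq_getElem?_getD, List.head_eq_getElem, List.getLast_eq_getElem,
    List.getElem?_eq_getElem hpos, List.getElem?_eq_getElem (Nat.sub_one_lt_of_lt hpos)]

theorem Admissible.append (hv : Admissible I k v) (hrk : r.length < k)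
    {b : α} (hb : b ∉ I) : Admissible I k (v ++ r ++ [b]) := by
  obtain ⟨hne, hhead, hlast, hrun⟩ := hv
  refine ⟨by simp, fun a ha => hhead a ?_, by simpa, ?_⟩
  · simpa [List.head?_append, List.head?_eq_some_head hne] using ha
  rintro ⟨s, hsk, hsI, hs⟩
  have hs' : s <:+: v ++ r := infix_of_infix_append_singleton hs fun h => hb (hsI b h)
  rcases infix_or_infix_of_infix_append hs' hsI hlast with h | h
  · exact hrun ⟨s, hsk, hsI, h⟩
  · exact hrk.not_ge (hsk ▸ h.length_le)

theorem Admissible.exists_eq_append [DecidableEq α] (hw : Admissible I k w)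
    (hlen : 2 ≤ w.length) : ∃ v r b, Admissible I k v ∧ (∀ a ∈ r, a ∈ I) ∧ r.length < k ∧
      b ∉ I ∧ v ++ r ++ [b] = w := by
  obtain ⟨hne, hhead, hlast, hrun⟩ := hw
  set p : α → Bool := fun a => decide (a ∈ I)
  set w' := w.dropLast
  have hw' : w' ≠ [] := by
    rw [← List.length_pos_iff, List.length_dropLast]
    omega
  have hv : w'.rdropWhile p ≠ [] := by
    rw [Ne, List.rdropWhile_eq_nil_iff]
    intro hall
    have h₁ := head?_eq_some_of_prefix (List.dropLast_prefix w) (List.head?_eq_some_head hw')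
    exact hhead _ h₁ (by simpa [p] using hall _ (List.head_mem hw'))
  have hv_prefix : w'.rdropWhile p <+: w :=
    (List.rdropWhile_prefix p w').trans (List.dropLast_prefix w)
  have hrI : ∀ a ∈ w'.rtakeWhile p, a ∈ I := fun a ha => by
    simpa [p] using List.mem_rtakeWhile_imp ha
  have hr_infix : w'.rtakeWhile p <:+: w :=
    (List.rtakeWhile_suffix p w').isInfix.trans (List.dropLast_prefix w).isInfix
  refine ⟨w'.rdropWhile p, w'.rtakeWhile p, w.getLast hne, ⟨hv, ?_, ?_, ?_⟩, hrI,
    length_lt_of_not_containsRun hrun hrI hr_infix,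
    hlast _ (List.getLast?_eq_some_getLast hne),
    by rw [List.rdropWhile_append_rtakeWhile, List.dropLast_append_getLast]⟩
  · exact fun a ha => hhead a (head?_eq_some_of_prefix hv_prefix ha)
  · intro a ha
    rw [List.getLast?_eq_some_getLast hv, Option.mem_some_iff] at ha
    simpa [p, ← ha] using List.rdropWhile_last_not p w' hv
  · exact fun h => hrun (h.mono hv_prefix.isInfix)

end Words

section Counting

variable {α : Type*} [Fintype α] [DecidableEq α] {I : Finset α} {k : ℕ}

theorem card_admissibleWord_one (hk : 1 ≤ k) : Nat.card (AdmissibleWord I k 1) = #Iᶜ := by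
  rw [← Nat.card_eq_finsetCard]
  refine (Nat.card_eq_of_bijective
    (fun b : ↥Iᶜ => (⟨[b.1], rfl, (admissible_singleton hk).mpr (mem_compl.mp b.2)⟩ :
      AdmissibleWord I k 1)) ⟨fun b₁ b₂ h => ?_, fun w => ?_⟩).symm
  · exact Subtype.ext (List.singleton_inj.mp (congrArg Subtype.val h))
  · obtain ⟨w, hlen, hw⟩ := w
    obtain ⟨b, rfl⟩ := List.length_eq_one_iff.mp hlen
    exact ⟨⟨b, mem_compl.mpr ((admissible_singleton hk).mp hw)⟩, rfl⟩

def appendRun {m : ℕ}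
    (x : Σ j : Fin k, AdmissibleWord I k (m + 1 - j) × (Fin j → I) × ↥Iᶜ) :
    AdmissibleWord I k (m + 2) :=
  ⟨x.2.1.1 ++ List.ofFn (fun i => (x.2.2.1 i : α)) ++ [x.2.2.2.1], by
    have := List.length_pos_iff.mpr x.2.1.2.2.1
    simp only [List.length_append, List.length_ofFn, List.length_singleton, x.2.1.2.1] at this ⊢
    omega,
    x.2.1.2.2.append (by simp) (mem_compl.mp x.2.2.2.2)⟩

theorem appendRun_injective {m : ℕ} :
    Function.Injective (appendRun (I := I) (k := k) (m := m)) := by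
  rintro ⟨j₁, v₁, r₁, b₁⟩ ⟨j₂, v₂, r₂, b₂⟩ h
  obtain ⟨h', hb⟩ := List.append_inj' (congrArg Subtype.val h) rfl
  obtain ⟨hv, hr⟩ := append_inj_of_getLast?_of_forall (p := fun a => decide (a ∈ I)) h'
    (by simpa using v₁.2.2.2.2.1) (by simpa using v₂.2.2.2.2.1)
    (by simp [List.mem_ofFn]) (by simp [List.mem_ofFn])
  obtain rfl : j₁ = j₂ := Fin.ext (by simpa using congrArg List.length hr)
  obtain rfl : r₁ = r₂ := funext fun i => Subtype.ext (congrFun (List.ofFn_injective hr) i)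
  obtain rfl : v₁ = v₂ := Subtype.ext hv
  obtain rfl : b₁ = b₂ := Subtype.ext (List.singleton_inj.mp hb)
  rfl

theorem appendRun_surjective {m : ℕ} :
    Function.Surjective (appendRun (I := I) (k := k) (m := m)) := by
  rintro ⟨w, hlen, hw⟩
  obtain ⟨v, r, b, hv, hr, hrk, hb, rfl⟩ := hw.exists_eq_append (by omega)
  refine ⟨⟨⟨r.length, hrk⟩, ⟨v, ?_, hv⟩, fun i => ⟨r[i], hr _ (List.getElem_mem _)⟩,
    ⟨b, mem_compl.mpr hb⟩⟩, Subtype.ext ?_⟩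
  · simp only [List.length_append, List.length_singleton] at hlen
    show v.length = m + 1 - r.length
    omega
  · simp [appendRun]

-- For `j > m + 1` the index `m + 1 - j` truncates to `0`, where the count vanishes anyway.
theorem card_admissibleWord_add_two (m : ℕ) :
    Nat.card (AdmissibleWord I k (m + 2)) =
      ∑ j ∈ range k, #I ^ j * #Iᶜ * Nat.card (AdmissibleWord I k (m + 1 - j)) := by
  rw [← Nat.card_eq_of_bijective _ ⟨appendRun_injective, appendRun_surjective⟩, Nat.card_sigma,
    ← Fin.sum_univ_eq_sum_range]
  refine sum_congr rfl fun j _ => ?_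
  rw [Nat.card_prod, Nat.card_prod, Nat.card_fun, Nat.card_eq_finsetCard, Nat.card_eq_finsetCard,
    Nat.card_eq_fintype_card (α := Fin j), Fintype.card_fin]
  ring

theorem card_admissibleWord_two (hk : 1 ≤ k) : Nat.card (AdmissibleWord I k 2) = #Iᶜ ^ 2 := by
  obtain ⟨k, rfl⟩ : ∃ k', k = k' + 1 := ⟨k - 1, by omega⟩
  rw [card_admissibleWord_add_two 0, sum_range_succ']
  simp [card_admissibleWord_zero, card_admissibleWord_one hk, sq]

end Counting

theorem eq_sub_of_sum_recurrence {R : Type*} [CommRing R] {f : ℕ → R} {x y : R} {k m : ℕ}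
    (h₁ : f (m + 2) = ∑ j ∈ range k, x ^ j * y * f (m + 1 - j))
    (h₂ : f (m + 1) = ∑ j ∈ range k, x ^ j * y * f (m - j)) :
    f (m + 2) = (x + y) * f (m + 1) - x ^ k * y * f (m + 1 - k) := by
  have h₃ : ∑ j ∈ range (k + 1), x ^ j * y * f (m + 1 - j) =
      x * ∑ j ∈ range k, x ^ j * y * f (m - j) + y * f (m + 1) := by
    rw [sum_range_succ', mul_sum]
    simp only [Nat.add_sub_add_right, pow_zero, one_mul, Nat.sub_zero]
    exact congrArg (· + _) (sum_congr rfl fun _ _ => by ring)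
  rw [sum_range_succ, ← h₂] at h₃
  linear_combination h₁ + h₃

end RunAvoidingWords

open RunAvoidingWords Finset in
/-- Let `u n` be the number of words of length `n` over `ℤ_q` that start
with a letter from `J`, end with a letter from `J`, and contain no `k` consecutive
letters all from `I` (where `I, J` bipartition `ℤ_q`), with `u n = 0` for `n ≤ 0`.
Then `u 1 = |J|`, `u 2 = |J|²`, and for all `n ≥ 3`,
`u n = q·u (n-1) - |I|^k·|J|·u (n-k-1)`. -/
theorem stmt7 (q k : ℕ) (hq : 2 ≤ q) (hk : 1 ≤ k)
    (I J : Finset (Fin q))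
    (hd : Disjoint I J) (hu : I ∪ J = Finset.univ)
    (u : ℤ → ℕ)
    (h0 : ∀ m : ℤ, m ≤ 0 → u m = 0)
    (hcard : ∀ m : ℕ, 1 ≤ m → u m = Nat.card {w : List (Fin q) //
      w.length = m ∧ w.getD 0 ⟨0, by omega⟩ ∈ J ∧ w.getD (m - 1) ⟨0, by omega⟩ ∈ J ∧
      ¬ ∃ v : List (Fin q), v.length = k ∧ (∀ a ∈ v, a ∈ I) ∧ v <:+: w}) :
    u 1 = J.card ∧ u 2 = J.card ^ 2 ∧
      ∀ n : ℤ, 3 ≤ n →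
        (u n : ℤ) = q * u (n - 1) - I.card ^ k * J.card * u (n - k - 1) := by
  obtain rfl : J = Iᶜ := (IsCompl.compl_eq ⟨hd, codisjoint_iff.mpr hu⟩).symm
  have hu_eq : ∀ m : ℤ, u m = Nat.card (AdmissibleWord I k m.toNat) := by
    intro m
    rcases le_or_gt m 0 with hm | hm
    · rw [h0 m hm, Int.toNat_of_nonpos hm, card_admissibleWord_zero]
    · lift m to ℕ using hm.le
      rw [hcard m (by omega), Int.toNat_natCast]
      refine Nat.card_congr (Equiv.subtypeEquivRight fun w => and_congr_right fun hw => ?_)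
      rw [admissible_iff_getD (List.ne_nil_of_length_pos (by omega)) ⟨0, by omega⟩, hw]
      simp [ContainsRun]
  have hq_card : (q : ℤ) = #I + #Iᶜ := by
    exact_mod_cast ((card_add_card_compl I).trans (Fintype.card_fin q)).symm
  refine ⟨by simpa [hu_eq] using card_admissibleWord_one hk,
    by simpa [hu_eq] using card_admissibleWord_two hk, fun n hn => ?_⟩
  obtain ⟨m, rfl⟩ : ∃ m : ℕ, n = m + 3 := ⟨(n - 3).toNat, by omega⟩
  rw [hu_eq, hu_eq, hu_eq, show (m + 3 : ℤ).toNat = m + 1 + 2 by omega,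
    show (m + 3 - 1 : ℤ).toNat = m + 1 + 1 by omega,
    show (m + 3 - k - 1 : ℤ).toNat = m + 1 + 1 - k by omega, hq_card]
  exact eq_sub_of_sum_recurrence (f := fun n => (Nat.card (AdmissibleWord I k n) : ℤ))
    (by exact_mod_cast card_admissibleWord_add_two (m + 1))
    (by exact_mod_cast card_admissibleWord_add_two m)
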